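/- arXiv:2311.03647 — 2 statements merged into one kernel-verified Lean document; each statement's English description precedes it below -/
import Mathlib

section
/- Let A be a unital nonassociative *-algebra over ℂ with a trace τ (positive, normalized, 2-cyclic, 3-cyclic). Then τ(a₁(a₂(a₃ a₄))) = τ((a₁ a₂)(a₃ a₄)) = τ(((a₁ a₂)a₃)a₄) for all a₁,a₂,a₃,a₄ ∈ A. -/
open scoped ComplexOrder

/-- Four-fold rebracketing identities under the trace. -/
theorem trace_four_fold
    {A : Type*} [NonAssocRing A] [Module ℂ A] [StarRing A] [StarModule ℂ A]
    (τ : A →ₗ[ℂ] ℂ)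
    (hpos : ∀ a : A, 0 ≤ τ (star a * a)) (hnorm : τ 1 = 1)
    (h2 : ∀ a b : A, τ (a * b) = τ (b * a))
    (h3 : ∀ a b c : A, τ (a * (b * c)) = τ (c * (a * b))) :
    ∀ a₁ a₂ a₃ a₄ : A,
      τ (a₁ * (a₂ * (a₃ * a₄))) = τ ((a₁ * a₂) * (a₃ * a₄)) ∧
      τ ((a₁ * a₂) * (a₃ * a₄)) = τ (((a₁ * a₂) * a₃) * a₄) := by
  intro a₁ a₂ a₃ a₄
  constructor
  · rw [h3 a₁ a₂ (a₃ * a₄), h2]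
  · rw [h3 (a₁ * a₂) a₃ a₄, h2]
end

section
/- Let a be an n×n complex matrix, λ ∈ ℂ, and φ a positive semidefinite n×n Hermitian matrix. If (1/2)(a·φ + φ·a) = λ φ and v ∈ ℂⁿ is an eigenvector of φ with strictly positive eigenvalue α > 0, then a·v = λ v. -/
open scoped ComplexOrder
open Matrix
set_option maxRecDepth 4000

/-- If φ is PSD and (1/2)(aφ + φa) = λφ, then every eigenvector of φ
with strictly positive eigenvalue is an eigenvector of a with eigenvalue λ. -/
theorem jordan_eigen_matrix
    {n : ℕ} (a φ : Matrix (Fin n) (Fin n) ℂ) (lam : ℂ)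
    (hφ : φ.PosSemidef)
    (hjordan : ((1 : ℂ) / 2) • (a * φ + φ * a) = lam • φ)
    (v : Fin n → ℂ) (hv0 : v ≠ 0) (α : ℝ) (hα : 0 < α)
    (hv : φ.mulVec v = (α : ℂ) • v) :
    a.mulVec v = lam • v := by
  set w : Fin n → ℂ := a.mulVec v - lam • v with hw
  have hsum : a * φ + φ * a = (2 * lam) • φ := by
    ext i j
    have h2 := congrFun (congrFun hjordan i) j
    simp [Matrix.smul_apply, Matrix.add_apply] at h2 ⊢
    linear_combination 2 * h2
  have hkey : φ.mulVec w = (-(α : ℂ)) • w := by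
    have h1 : φ.mulVec (a.mulVec v) = (2 * lam) • ((α:ℂ) • v) - (α:ℂ) • a.mulVec v := by
      have h2 : (φ * a).mulVec v = (2 * lam) • φ.mulVec v - (a * φ).mulVec v := by
        have : (a * φ + φ * a).mulVec v = ((2 * lam) • φ).mulVec v := by rw [hsum]
        simp only [Matrix.add_mulVec, Matrix.smul_mulVec] at this
        linear_combination (norm := module) this
      have h3 : (φ * a).mulVec v = φ.mulVec (a.mulVec v) := by
        rw [Matrix.mulVec_mulVec]
      have h4 : (a * φ).mulVec v = a.mulVec (φ.mulVec v) := by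
        rw [Matrix.mulVec_mulVec]
      rw [← h3, h2, h4, hv]
      simp [Matrix.mulVec_smul]
    simp only [hw, Matrix.mulVec_sub, Matrix.mulVec_smul, h1, hv]
    module
  have hpsd := hφ.dotProduct_mulVec_nonneg w
  rw [hkey] at hpsd
  have hdp : (0:ℂ) ≤ star w ⬝ᵥ w := by
    simpa using dotProduct_star_self_nonneg w
  have hdp2 : star w ⬝ᵥ ((-(α : ℂ)) • w) = (-(α : ℂ)) * (star w ⬝ᵥ w) := by
    simp [dotProduct_smul]
  rw [hdp2] at hpsd
  have hzero : star w ⬝ᵥ w = 0 := by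
    by_contra h
    have hpos : (0:ℂ) < star w ⬝ᵥ w := lt_of_le_of_ne hdp (Ne.symm h)
    have : (0:ℂ) < (α : ℂ) := by exact_mod_cast hα
    have hneg : (-(α : ℂ)) * (star w ⬝ᵥ w) < 0 :=
      mul_neg_of_neg_of_pos (by simpa using neg_neg_of_pos this) hpos
    exact absurd (lt_of_le_of_lt hpsd hneg) (lt_irrefl 0)
  have hw0 : w = 0 := by
    rwa [dotProduct_star_self_eq_zero] at hzero
  have := sub_eq_zero.mp (hw ▸ hw0)
  exact this
end
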